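/- Let φ, ψ : ℝ → ℝ be locally integrable and suppose f(x,y) = φ(x)ψ(y) belongs to BMO(ℝ²) (i.e. ‖f‖_{BMO(ℝ²)} < ∞) and f is nonzero on a set of positive Lebesgue measure in ℝ². Then φ ∈ BMO(ℝ) and ψ ∈ BMO(ℝ). -/

import Mathlib

open MeasureTheory Set Filter
open scoped ENNReal Topology

/-- Mean oscillation of `f : ℝ → ℝ` over `A ⊆ ℝ`. -/
noncomputable def osc1 (f : ℝ → ℝ) (A : Set ℝ) : ℝ :=
  ⨍ x in A, |f x - ⨍ y in A, f y|

/-- BMO(ℝ) seminorm. -/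
noncomputable def bmo1 (f : ℝ → ℝ) : ℝ≥0∞ :=
  ⨆ (a : ℝ) (b : ℝ) (_ : a < b), ENNReal.ofReal (osc1 f (Icc a b))

/-- Mean oscillation of `f : ℝ × ℝ → ℝ` over `E ⊆ ℝ²`. -/
noncomputable def osc2 (f : ℝ × ℝ → ℝ) (E : Set (ℝ × ℝ)) : ℝ :=
  ⨍ p in E, |f p - ⨍ q in E, f q|

/-- BMO(ℝ²) seminorm: supremum over closed axis-parallel squares of positive side length. -/
noncomputable def bmo2 (f : ℝ × ℝ → ℝ) : ℝ≥0∞ :=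
  ⨆ (a : ℝ) (b : ℝ) (l : ℝ) (_ : 0 < l),
    ENNReal.ofReal (osc2 f (Icc a (a + l) ×ˢ Icc b (b + l)))

/-!
On a rectangle `I × J`, Fubini and the elementary bound `⨍ |g - ⨍ g| ≤ 2 ⨍ |g - c|` (applied to
`x ↦ φ x ψ y` with `c` the mean of `f` on `I × J`) give `⨍_J |ψ| · O(φ, I) ≤ 2 O(f, I × J)`, and
symmetrically `⨍_I |φ| · O(ψ, J) ≤ 2 O(f, I × J)`. So `O(φ, I)` is controlled as soon as some
interval `J` with `|J| = |I|` carries a large average of `|ψ|`.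

Since `ψ` is not a.e. zero, `|ψ|` has mass `m > 0` on some unit interval; by pigeonhole, at every
scale `l ≤ R` some interval of length `l` has `⨍ |ψ| ≥ m / 2R`, which handles small intervals.
For long intervals there are two cases. If `ψ` oscillates on some interval of length `L`, the
second inequality bounds `⨍ |φ|` on all intervals of length `L`, hence (covering) on all longer
ones, and `O(φ, I) ≤ 2 ⨍_I |φ|`. Otherwise `ψ` is a.e. constant, and the intervals of length
`l ≥ 1` starting at the unit interval keep `⨍ |ψ| ≥ m`.
-/

noncomputable def meanOsc {α : Type*} [MeasurableSpace α] (μ : Measure α) (f : α → ℝ) : ℝ :=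
  ⨍ x, |f x - ⨍ y, f y ∂μ| ∂μ

section MeanOscillation

variable {α β : Type*} [MeasurableSpace α] [MeasurableSpace β] {μ : Measure α} {ν : Measure β}

theorem meanOsc_nonneg (f : α → ℝ) : 0 ≤ meanOsc μ f := by
  rw [meanOsc, average_eq, smul_eq_mul]
  exact mul_nonneg (inv_nonneg.2 measureReal_nonneg) (integral_nonneg fun _ => abs_nonneg _)

theorem abs_average_le_average_abs (f : α → ℝ) : |⨍ x, f x ∂μ| ≤ ⨍ x, |f x| ∂μ := by
  have hμ : 0 ≤ (μ.real univ)⁻¹ := inv_nonneg.2 measureReal_nonneg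
  rw [average_eq, average_eq, smul_eq_mul, smul_eq_mul, abs_mul, abs_of_nonneg hμ]
  exact mul_le_mul_of_nonneg_left abs_integral_le_integral_abs hμ

theorem integral_abs_sub_average_le [IsFiniteMeasure μ] {f : α → ℝ} (hf : Integrable f μ)
    (c : ℝ) : ∫ x, |f x - ⨍ y, f y ∂μ| ∂μ ≤ 2 * ∫ x, |f x - c| ∂μ := by
  set m := ⨍ y, f y ∂μ
  have hdist : μ.real univ * |c - m| ≤ ∫ x, |f x - c| ∂μ :=
    calc μ.real univ * |c - m| = |∫ x, (c - f x) ∂μ| := by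
          rw [integral_sub (integrable_const c) hf, integral_const, ← measure_smul_average μ f,
            smul_eq_mul, smul_eq_mul, ← mul_sub, abs_mul, abs_of_nonneg measureReal_nonneg]
      _ ≤ ∫ x, |c - f x| ∂μ := abs_integral_le_integral_abs
      _ = ∫ x, |f x - c| ∂μ := by simp_rw [abs_sub_comm]
  have hfc : Integrable (fun x => |f x - c|) μ := (hf.sub (integrable_const c)).abs
  calc ∫ x, |f x - m| ∂μ ≤ ∫ x, (|f x - c| + |c - m|) ∂μ :=
        integral_mono (hf.sub (integrable_const m)).abs (hfc.add (integrable_const _))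
          fun x => abs_sub_le _ _ _
    _ = ∫ x, |f x - c| ∂μ + μ.real univ * |c - m| := by
        rw [integral_add hfc (integrable_const _), integral_const, smul_eq_mul]
    _ ≤ 2 * ∫ x, |f x - c| ∂μ := by linarith

theorem meanOsc_le_two_mul_average_abs_sub [IsFiniteMeasure μ] {f : α → ℝ}
    (hf : Integrable f μ) (c : ℝ) : meanOsc μ f ≤ 2 * ⨍ x, |f x - c| ∂μ := by
  rw [meanOsc, average_eq μ fun x => |f x - ⨍ y, f y ∂μ|, average_eq μ fun x => |f x - c|,
    smul_eq_mul, smul_eq_mul, mul_left_comm]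
  exact mul_le_mul_of_nonneg_left (integral_abs_sub_average_le hf c)
    (inv_nonneg.2 measureReal_nonneg)

theorem average_abs_mul_meanOsc_le_meanOsc_prod [IsFiniteMeasure μ] [IsFiniteMeasure ν]
    {φ : α → ℝ} {ψ : β → ℝ} (hφ : Integrable φ μ) (hψ : Integrable ψ ν) :
    (⨍ y, |ψ y| ∂ν) * meanOsc μ φ ≤ 2 * meanOsc (μ.prod ν) (fun z => φ z.1 * ψ z.2) := by
  set c := ⨍ z, φ z.1 * ψ z.2 ∂μ.prod ν
  set K := ∫ x, |φ x - ⨍ x', φ x' ∂μ| ∂μ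
  have hf : Integrable (fun z : α × β => |φ z.1 * ψ z.2 - c|) (μ.prod ν) :=
    ((hφ.mul_prod hψ).sub (integrable_const c)).abs
  have hslice : ∀ y, |ψ y| * K ≤ 2 * ∫ x, |φ x * ψ y - c| ∂μ := fun y => by
    have hmean : ⨍ x, φ x * ψ y ∂μ = (⨍ x, φ x ∂μ) * ψ y := by
      simp only [average_eq, smul_eq_mul, integral_mul_const]; ring
    calc |ψ y| * K = ∫ x, |φ x * ψ y - ⨍ x', φ x' * ψ y ∂μ| ∂μ := by
          rw [hmean, ← integral_const_mul]
          congr 1 with x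
          rw [← abs_mul, mul_comm, sub_mul]
      _ ≤ 2 * ∫ x, |φ x * ψ y - c| ∂μ := integral_abs_sub_average_le (hφ.mul_const _) c
  have hfubini : (∫ y, |ψ y| ∂ν) * K ≤ 2 * ∫ z, |φ z.1 * ψ z.2 - c| ∂μ.prod ν := by
    rw [integral_prod_symm _ hf, ← integral_mul_const, ← integral_const_mul]
    exact integral_mono (hψ.abs.mul_const K) (hf.integral_prod_right.const_mul 2) hslice
  rw [meanOsc, meanOsc, average_eq ν fun y => |ψ y|, average_eq μ fun x => |φ x - ⨍ x', φ x' ∂μ|,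
    average_eq (μ.prod ν) fun z => |φ z.1 * ψ z.2 - c|, smul_eq_mul, smul_eq_mul, smul_eq_mul,
    ← univ_prod_univ, measureReal_prod_prod, mul_inv]
  calc (ν.real univ)⁻¹ * (∫ y, |ψ y| ∂ν) * ((μ.real univ)⁻¹ * K)
      = ((μ.real univ)⁻¹ * (ν.real univ)⁻¹) * ((∫ y, |ψ y| ∂ν) * K) := by ring
    _ ≤ ((μ.real univ)⁻¹ * (ν.real univ)⁻¹) * (2 * ∫ z, |φ z.1 * ψ z.2 - c| ∂μ.prod ν) :=
        mul_le_mul_of_nonneg_left hfubini (by positivity)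
    _ = _ := by ring

theorem meanOsc_prod_swap [SFinite μ] [SFinite ν] (f : α × β → ℝ) :
    meanOsc (ν.prod μ) (fun z => f z.swap) = meanOsc (μ.prod ν) f := by
  have hswap : ∀ g : α × β → ℝ, ⨍ z, g z.swap ∂ν.prod μ = ⨍ z, g z ∂μ.prod ν := fun g => by
    rw [average_eq, average_eq, integral_prod_swap, ← univ_prod_univ, ← univ_prod_univ,
      measureReal_prod_prod, measureReal_prod_prod, mul_comm (ν.real univ)]
  rw [meanOsc, meanOsc, hswap f, hswap fun z => |f z - ⨍ z', f z' ∂μ.prod ν|]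

theorem average_abs_mul_meanOsc_le_meanOsc_prod' [IsFiniteMeasure μ] [IsFiniteMeasure ν]
    {φ : α → ℝ} {ψ : β → ℝ} (hφ : Integrable φ μ) (hψ : Integrable ψ ν) :
    (⨍ x, |φ x| ∂μ) * meanOsc ν ψ ≤ 2 * meanOsc (μ.prod ν) (fun z => φ z.1 * ψ z.2) := by
  refine (average_abs_mul_meanOsc_le_meanOsc_prod hψ hφ).trans_eq ?_
  rw [← meanOsc_prod_swap fun z : α × β => φ z.1 * ψ z.2]
  simp only [Prod.fst_swap, Prod.snd_swap, mul_comm]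

end MeanOscillation

theorem osc1_eq_meanOsc (f : ℝ → ℝ) (s : Set ℝ) : osc1 f s = meanOsc (volume.restrict s) f := rfl

theorem osc2_eq_meanOsc (f : ℝ × ℝ → ℝ) (E : Set (ℝ × ℝ)) :
    osc2 f E = meanOsc (volume.restrict E) f := rfl

theorem osc1_nonneg (f : ℝ → ℝ) (s : Set ℝ) : 0 ≤ osc1 f s := meanOsc_nonneg f

theorem osc1_le_two_mul_setAverage_abs {f : ℝ → ℝ} {s : Set ℝ} (hs : volume s ≠ ∞)
    (hf : IntegrableOn f s) : osc1 f s ≤ 2 * ⨍ x in s, |f x| := by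
  have : Fact (volume s < ∞) := ⟨hs.lt_top⟩
  simpa [osc1_eq_meanOsc] using meanOsc_le_two_mul_average_abs_sub hf 0

section Rectangles

variable {φ ψ : ℝ → ℝ} {s t : Set ℝ}

theorem setAverage_abs_mul_osc1_le_osc2 (hs : volume s ≠ ∞) (ht : volume t ≠ ∞)
    (hφ : IntegrableOn φ s) (hψ : IntegrableOn ψ t) :
    (⨍ y in t, |ψ y|) * osc1 φ s ≤ 2 * osc2 (fun p => φ p.1 * ψ p.2) (s ×ˢ t) := by
  have : Fact (volume s < ∞) := ⟨hs.lt_top⟩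
  have : Fact (volume t < ∞) := ⟨ht.lt_top⟩
  rw [osc1_eq_meanOsc, osc2_eq_meanOsc, Measure.volume_eq_prod, ← Measure.prod_restrict]
  exact average_abs_mul_meanOsc_le_meanOsc_prod hφ hψ

theorem setAverage_abs_mul_osc1_le_osc2' (hs : volume s ≠ ∞) (ht : volume t ≠ ∞)
    (hφ : IntegrableOn φ s) (hψ : IntegrableOn ψ t) :
    (⨍ x in s, |φ x|) * osc1 ψ t ≤ 2 * osc2 (fun p => φ p.1 * ψ p.2) (s ×ˢ t) := by
  have : Fact (volume s < ∞) := ⟨hs.lt_top⟩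
  have : Fact (volume t < ∞) := ⟨ht.lt_top⟩
  rw [osc1_eq_meanOsc, osc2_eq_meanOsc, Measure.volume_eq_prod, ← Measure.prod_restrict]
  exact average_abs_mul_meanOsc_le_meanOsc_prod' hφ hψ

end Rectangles

theorem MeasureTheory.LocallyIntegrable.abs {g : ℝ → ℝ} (hg : LocallyIntegrable g volume) :
    LocallyIntegrable (fun x => |g x|) volume :=
  locallyIntegrableOn_univ.1 (hg.locallyIntegrableOn univ).norm

theorem setAverage_Icc_add {g : ℝ → ℝ} (a : ℝ) {l : ℝ} (hl : 0 ≤ l) :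
    ⨍ x in Icc a (a + l), g x = l⁻¹ * ∫ x in Icc a (a + l), g x := by
  rw [setAverage_eq, Real.volume_real_Icc_of_le (by linarith), add_sub_cancel_left, smul_eq_mul]

theorem integral_Icc_eq_sum_integral_Icc {g : ℝ → ℝ} (hg : LocallyIntegrable g volume) (u : ℝ)
    {l : ℝ} (hl : 0 ≤ l) (n : ℕ) :
    ∫ x in Icc u (u + n * l), g x =
      ∑ k ∈ Finset.range n, ∫ x in Icc (u + k * l) (u + k * l + l), g x := by
  have hIcc : ∀ {a b : ℝ}, a ≤ b → ∫ x in Icc a b, g x = ∫ x in a..b, g x := fun hab => by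
    rw [intervalIntegral.integral_of_le hab, integral_Icc_eq_integral_Ioc]
  have hsum := intervalIntegral.sum_integral_adjacent_intervals (a := fun k : ℕ => u + k * l)
    (n := n) fun k _ => (hg.integrableOn_isCompact isCompact_uIcc).intervalIntegrable
  simp only [Nat.cast_zero, zero_mul, add_zero, Nat.cast_succ, add_one_mul, ← add_assoc] at hsum
  rw [hIcc (by nlinarith [n.cast_nonneg (α := ℝ)]), ← hsum]
  exact Finset.sum_congr rfl fun k _ => (hIcc (by linarith)).symm

theorem le_ceil_div_mul_le_two_mul {R l : ℝ} (hl : 0 < l) (hlR : l ≤ R) :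
    R ≤ ⌈R / l⌉₊ * l ∧ ⌈R / l⌉₊ * l ≤ 2 * R := by
  have hceil := mul_lt_mul_of_pos_right (Nat.ceil_lt_add_one (div_pos (hl.trans_le hlR) hl).le) hl
  rw [add_mul, div_mul_cancel₀ _ hl.ne', one_mul] at hceil
  exact ⟨(div_le_iff₀ hl).1 (Nat.le_ceil _), by linarith⟩

section NonnegAverages

variable {g : ℝ → ℝ}

theorem exists_setAverage_Icc_ge (hg : LocallyIntegrable g volume) (hg0 : 0 ≤ g)
    {u v l R : ℝ} (hl : 0 < l) (hlR : l ≤ R) (hvR : v ≤ u + R) :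
    ∃ p, (∫ x in Icc u v, g x) / (2 * R) ≤ ⨍ x in Icc p (p + l), g x := by
  set m := ∫ x in Icc u v, g x
  set n := ⌈R / l⌉₊
  have hRl : 1 ≤ R / l := (one_le_div hl).2 hlR
  have hn : 0 < n := Nat.ceil_pos.2 (by linarith)
  obtain ⟨hRn, hnR⟩ := le_ceil_div_mul_le_two_mul hl hlR
  have hsum : ∑ _k ∈ Finset.range n, m / n ≤
      ∑ k ∈ Finset.range n, ∫ x in Icc (u + k * l) (u + k * l + l), g x := by
    rw [Finset.sum_const, Finset.card_range, nsmul_eq_mul, mul_div_cancel₀ _ (by positivity),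
      ← integral_Icc_eq_sum_integral_Icc hg u hl.le n]
    exact setIntegral_mono_set (hg.integrableOn_isCompact isCompact_Icc) (ae_of_all _ hg0)
      (ae_of_all _ (Icc_subset_Icc_right (by linarith)))
  obtain ⟨k, -, hk⟩ := Finset.exists_le_of_sum_le (Finset.nonempty_range_iff.2 hn.ne') hsum
  refine ⟨u + k * l, ?_⟩
  rw [setAverage_Icc_add _ hl.le]
  calc m / (2 * R) ≤ m / (n * l) :=
        div_le_div_of_nonneg_left (integral_nonneg hg0) (by positivity) hnR
    _ = l⁻¹ * (m / n) := by field_simp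
    _ ≤ _ := mul_le_mul_of_nonneg_left hk (by positivity)

theorem setAverage_Icc_le_two_mul (hg : LocallyIntegrable g volume) (hg0 : 0 ≤ g) {L M : ℝ}
    (hL : 0 < L) (hM : ∀ p, ⨍ x in Icc p (p + L), g x ≤ M) (a : ℝ) {l : ℝ} (hLl : L ≤ l) :
    ⨍ x in Icc a (a + l), g x ≤ 2 * M := by
  have hpiece : ∀ p, ∫ x in Icc p (p + L), g x ≤ L * M := fun p => by
    have := hM p
    rw [setAverage_Icc_add _ hL.le, inv_mul_le_iff₀ hL] at this
    exact this
  have hM0 : 0 ≤ M := nonneg_of_mul_nonneg_right ((integral_nonneg hg0).trans (hpiece 0)) hL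
  set n := ⌈l / L⌉₊
  obtain ⟨hln, hnl⟩ := le_ceil_div_mul_le_two_mul hL hLl
  have hint : ∫ x in Icc a (a + l), g x ≤ 2 * l * M :=
    calc ∫ x in Icc a (a + l), g x ≤ ∫ x in Icc a (a + n * L), g x :=
          setIntegral_mono_set (hg.integrableOn_isCompact isCompact_Icc) (ae_of_all _ hg0)
            (ae_of_all _ (Icc_subset_Icc_right (by linarith)))
      _ = ∑ k ∈ Finset.range n, ∫ x in Icc (a + k * L) (a + k * L + L), g x :=
          integral_Icc_eq_sum_integral_Icc hg a hL.le n
      _ ≤ ∑ _k ∈ Finset.range n, L * M := Finset.sum_le_sum fun k _ => hpiece _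
      _ = n * L * M := by rw [Finset.sum_const, Finset.card_range, nsmul_eq_mul, mul_assoc]
      _ ≤ 2 * l * M := mul_le_mul_of_nonneg_right hnl hM0
  rw [setAverage_Icc_add _ (by linarith), inv_mul_le_iff₀ (by linarith)]
  linarith

end NonnegAverages

theorem integral_abs_le_of_osc1_eq_zero {g : ℝ → ℝ} {s t : Set ℝ} (hst : s ⊆ t)
    (ht : volume t ≠ ∞) (hg : IntegrableOn g t) (hosc : osc1 g t = 0) :
    ∫ x in s, |g x| ≤ volume.real s * ⨍ x in t, |g x| := by
  set c := ⨍ x in t, g x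
  have hs : volume s ≠ ∞ := ne_top_of_le_ne_top ht (measure_mono hst)
  have hgc : IntegrableOn (fun x => |g x - c|) t := (hg.sub (integrableOn_const ht)).abs
  have hdev : ∫ x in t, |g x - c| = 0 := by
    rw [← measure_smul_setAverage _ ht]
    exact (congrArg _ hosc).trans (smul_zero _)
  calc ∫ x in s, |g x| ≤ ∫ x in s, (|g x - c| + |c|) :=
        setIntegral_mono (hg.mono_set hst).abs ((hgc.mono_set hst).add (integrableOn_const hs))
          fun x => by simpa using abs_add_le (g x - c) c
    _ = (∫ x in s, |g x - c|) + volume.real s * |c| := by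
        rw [integral_add (hgc.mono_set hst) (integrableOn_const hs), setIntegral_const,
          smul_eq_mul]
    _ ≤ (∫ x in t, |g x - c|) + volume.real s * ⨍ x in t, |g x| :=
        add_le_add (setIntegral_mono_set hgc (ae_of_all _ fun _ => abs_nonneg _)
          (ae_of_all _ hst)) (mul_le_mul_of_nonneg_left (abs_average_le_average_abs _)
          measureReal_nonneg)
    _ = volume.real s * ⨍ x in t, |g x| := by rw [hdev, zero_add]

theorem exists_integral_Icc_abs_pos {g : ℝ → ℝ} (hg : LocallyIntegrable g volume)
    (h : volume {x | g x ≠ 0} ≠ 0) : ∃ u : ℝ, 0 < ∫ x in Icc u (u + 1), |g x| := by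
  by_contra! H
  refine h (measure_mono_null (t := ⋃ n : ℤ, {x | g x ≠ 0} ∩ Icc (n : ℝ) (n + 1))
    (fun x hx => ?_) (measure_iUnion_null fun n => ?_))
  · rw [← inter_iUnion, iUnion_Icc_intCast, inter_univ]
    exact hx
  · have hn := (H n).not_gt
    rw [setIntegral_pos_iff_support_of_nonneg_ae (ae_of_all _ fun _ => abs_nonneg _)
      (hg.integrableOn_isCompact isCompact_Icc).abs, not_lt, nonpos_iff_eq_zero] at hn
    simpa [Function.support] using hn

theorem bmo1_ne_top_of_forall_osc1_le {f : ℝ → ℝ} {K : ℝ}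
    (h : ∀ a l, 0 < l → osc1 f (Icc a (a + l)) ≤ K) : bmo1 f ≠ ⊤ :=
  ne_top_of_le_ne_top ENNReal.ofReal_ne_top <| iSup₂_le fun a b => iSup_le fun hab =>
    ENNReal.ofReal_le_ofReal <| by simpa using h a (b - a) (sub_pos.2 hab)

theorem osc2_le_toReal_bmo2 {f : ℝ × ℝ → ℝ} (h : bmo2 f ≠ ⊤) (a b : ℝ) {l : ℝ} (hl : 0 < l) :
    osc2 f (Icc a (a + l) ×ˢ Icc b (b + l)) ≤ (bmo2 f).toReal :=
  (ENNReal.ofReal_le_iff_le_toReal h).1 <| le_iSup₂_of_le a b <| le_iSup₂_of_le l hl le_rfl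

def OscProductBound (φ ψ : ℝ → ℝ) (B : ℝ) : Prop :=
  ∀ a b l, 0 < l → (⨍ y in Icc b (b + l), |ψ y|) * osc1 φ (Icc a (a + l)) ≤ B

section ProductBounds

variable {φ ψ : ℝ → ℝ} {B : ℝ}

theorem oscProductBound_of_bmo2_ne_top (hφ : LocallyIntegrable φ volume)
    (hψ : LocallyIntegrable ψ volume) (hbmo : bmo2 (fun p => φ p.1 * ψ p.2) ≠ ⊤) :
    OscProductBound φ ψ (2 * (bmo2 fun p => φ p.1 * ψ p.2).toReal) := fun a b l hl =>
  (setAverage_abs_mul_osc1_le_osc2 measure_Icc_lt_top.ne measure_Icc_lt_top.ne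
    (hφ.integrableOn_isCompact isCompact_Icc) (hψ.integrableOn_isCompact isCompact_Icc)).trans
    (by gcongr; exact osc2_le_toReal_bmo2 hbmo a b hl)

theorem oscProductBound_swap_of_bmo2_ne_top (hφ : LocallyIntegrable φ volume)
    (hψ : LocallyIntegrable ψ volume) (hbmo : bmo2 (fun p => φ p.1 * ψ p.2) ≠ ⊤) :
    OscProductBound ψ φ (2 * (bmo2 fun p => φ p.1 * ψ p.2).toReal) := fun a b l hl =>
  (setAverage_abs_mul_osc1_le_osc2' measure_Icc_lt_top.ne measure_Icc_lt_top.ne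
    (hφ.integrableOn_isCompact isCompact_Icc) (hψ.integrableOn_isCompact isCompact_Icc)).trans
    (by gcongr; exact osc2_le_toReal_bmo2 hbmo b a hl)

theorem osc1_le_div_of_le_setAverage_abs (h₁ : OscProductBound φ ψ B) {a b l c : ℝ} (hl : 0 < l)
    (hc : 0 < c) (hcψ : c ≤ ⨍ y in Icc b (b + l), |ψ y|) :
    osc1 φ (Icc a (a + l)) ≤ B / c := by
  rw [le_div_iff₀ hc, mul_comm]
  exact (mul_le_mul_of_nonneg_right hcψ (osc1_nonneg _ _)).trans (h₁ a b l hl)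

theorem osc1_le_of_le_scale (hψ : LocallyIntegrable ψ volume) (h₁ : OscProductBound φ ψ B)
    {u R : ℝ} (hR : 1 ≤ R) (hm : 0 < ∫ y in Icc u (u + 1), |ψ y|) (a : ℝ) {l : ℝ} (hl : 0 < l)
    (hlR : l ≤ R) :
    osc1 φ (Icc a (a + l)) ≤ B / ((∫ y in Icc u (u + 1), |ψ y|) / (2 * R)) := by
  obtain ⟨p, hp⟩ := exists_setAverage_Icc_ge hψ.abs (fun _ => abs_nonneg _) hl hlR
    (by linarith : u + 1 ≤ u + R)
  exact osc1_le_div_of_le_setAverage_abs h₁ hl (by positivity) hp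

theorem bmo1_ne_top_of_oscProductBound (hφ : LocallyIntegrable φ volume)
    (hψ : LocallyIntegrable ψ volume) (h₁ : OscProductBound φ ψ B) (h₂ : OscProductBound ψ φ B)
    (hψ0 : volume {y | ψ y ≠ 0} ≠ 0) : bmo1 φ ≠ ⊤ := by
  obtain ⟨u, hm⟩ := exists_integral_Icc_abs_pos hψ hψ0
  set m := ∫ y in Icc u (u + 1), |ψ y|
  by_cases hosc : ∃ p L, 0 < L ∧ 0 < osc1 ψ (Icc p (p + L))
  · obtain ⟨p, L, hL, hψL⟩ := hosc
    have hφL : ∀ x, ⨍ t in Icc x (x + L), |φ t| ≤ B / osc1 ψ (Icc p (p + L)) := fun x => by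
      rw [le_div_iff₀ hψL]
      exact h₂ p x L hL
    refine bmo1_ne_top_of_forall_osc1_le (K := max (B / (m / (2 * max L 1)))
      (2 * (2 * (B / osc1 ψ (Icc p (p + L)))))) fun a l hl => ?_
    rcases le_total l (max L 1) with hlR | hRl
    · exact (osc1_le_of_le_scale hψ h₁ (le_max_right _ _) hm a hl hlR).trans (le_max_left _ _)
    · refine le_max_of_le_right ((osc1_le_two_mul_setAverage_abs measure_Icc_lt_top.ne
        (hφ.integrableOn_isCompact isCompact_Icc)).trans ?_)
      gcongr
      exact setAverage_Icc_le_two_mul hφ.abs (fun _ => abs_nonneg _) hL hφL a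
        ((le_max_left _ _).trans hRl)
  · push Not at hosc
    refine bmo1_ne_top_of_forall_osc1_le (K := B / (m / 2)) fun a l hl => ?_
    rcases le_total l 1 with hl1 | hl1
    · simpa using osc1_le_of_le_scale hψ h₁ le_rfl hm a hl hl1
    · have hmass := integral_abs_le_of_osc1_eq_zero
        (Icc_subset_Icc_right (by linarith) : Icc u (u + 1) ⊆ Icc u (u + l))
        measure_Icc_lt_top.ne (hψ.integrableOn_isCompact isCompact_Icc)
        ((hosc u l hl).antisymm (osc1_nonneg _ _))
      rw [Real.volume_real_Icc_of_le (by linarith), add_sub_cancel_left, one_mul] at hmass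
      exact osc1_le_div_of_le_setAverage_abs (b := u) h₁ hl (half_pos hm) (by linarith)

end ProductBounds

/-- if `φ, ψ` are locally integrable, `f(x,y) = φ(x)ψ(y)` belongs to
`BMO(ℝ²)`, and `f` is nonzero on a set of positive measure, then `φ ∈ BMO(ℝ)` and
`ψ ∈ BMO(ℝ)`. -/
theorem product_in_bmo_implies_factors_in_bmo
    (φ ψ : ℝ → ℝ) (hφ : LocallyIntegrable φ volume) (hψ : LocallyIntegrable ψ volume)
    (hbmo : bmo2 (fun p => φ p.1 * ψ p.2) ≠ ⊤)
    (hnz : 0 < volume {p : ℝ × ℝ | φ p.1 * ψ p.2 ≠ 0}) :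
    bmo1 φ ≠ ⊤ ∧ bmo1 ψ ≠ ⊤ := by
  have hsupp : {p : ℝ × ℝ | φ p.1 * ψ p.2 ≠ 0} = {x | φ x ≠ 0} ×ˢ {y | ψ y ≠ 0} := by
    ext p
    simp
  rw [hsupp, Measure.volume_eq_prod, Measure.prod_prod, ENNReal.mul_pos_iff] at hnz
  have h₁ := oscProductBound_of_bmo2_ne_top hφ hψ hbmo
  have h₂ := oscProductBound_swap_of_bmo2_ne_top hφ hψ hbmo
  exact ⟨bmo1_ne_top_of_oscProductBound hφ hψ h₁ h₂ hnz.2.ne',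
    bmo1_ne_top_of_oscProductBound hψ hφ h₂ h₁ hnz.1.ne'⟩
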